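/- arXiv:2106.06764 — 9 statements merged into one kernel-verified Lean document; each statement's English description precedes it below -/
import Mathlib

section
/- Let α, β ∈ ℂ satisfy α² ∉ {0,1}, β² ∉ {0,1}, α² ≠ β², and α²β² ≠ 1. If (x, y) ∈ ℂ² satisfies y² = x(x−1)(x−α²)(x−β²)(x−α²β²) and x ≠ αβ, then the point (X, Y) with X = (α−β)²x/(x−αβ)² and Y = (α−β)²y/((αβ−1)(x−αβ)³) satisfies Y² = X(X−1)(X − (α−β)²/(αβ−1)²). -/
/-!
Write `X = (α - β)² x / (x - αβ)²` and `c = (α - β)² / (αβ - 1)²`. The two shifted coordinates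
factor through the quintic: since `(x - αβ)² - (α - β)² x = (x - α²)(x - β²)` and
`(x - αβ)² - (αβ - 1)² x = (x - 1)(x - α²β²)`, the product `X (X - 1) (X - c)` equals
`(α - β)⁴ x (x - 1)(x - α²)(x - β²)(x - α²β²) / ((αβ - 1)² (x - αβ)⁶)`, which is `Y²` on `V`.
-/

section

variable {K : Type*} [Field K] {α β x : K}

lemma mul_sub_one_ne_zero_of_sq_mul_sq_ne_one (h : α ^ 2 * β ^ 2 ≠ 1) : α * β - 1 ≠ 0 := by
  intro hαβ
  apply h
  rw [← mul_pow, sub_eq_zero.mp hαβ, one_pow]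

lemma div_sq_sub_one_eq (hx : x - α * β ≠ 0) :
    (α - β) ^ 2 * x / (x - α * β) ^ 2 - 1 = -((x - α ^ 2) * (x - β ^ 2)) / (x - α * β) ^ 2 := by
  field_simp
  ring

lemma div_sq_sub_div_sq_eq (hx : x - α * β ≠ 0) (hαβ : α * β - 1 ≠ 0) :
    (α - β) ^ 2 * x / (x - α * β) ^ 2 - (α - β) ^ 2 / (α * β - 1) ^ 2 =
      -((α - β) ^ 2 * ((x - 1) * (x - α ^ 2 * β ^ 2))) / ((α * β - 1) ^ 2 * (x - α * β) ^ 2) := by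
  field_simp
  ring

end

theorem stmt_0_general (α β x y : ℂ)
    (hαβ1 : α^2 * β^2 ≠ 1)
    (hV : y^2 = x * (x - 1) * (x - α^2) * (x - β^2) * (x - α^2 * β^2))
    (hx : x ≠ α * β) :
    ((α - β)^2 * y / ((α * β - 1) * (x - α * β)^3))^2 =
      ((α - β)^2 * x / (x - α * β)^2) *
      ((α - β)^2 * x / (x - α * β)^2 - 1) *
      ((α - β)^2 * x / (x - α * β)^2 - (α - β)^2 / (α * β - 1)^2) := by
  have hαβ : α * β - 1 ≠ 0 := mul_sub_one_ne_zero_of_sq_mul_sq_ne_one hαβ1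
  have hxαβ : x - α * β ≠ 0 := sub_ne_zero.mpr hx
  rw [div_sq_sub_one_eq hxαβ, div_sq_sub_div_sq_eq hxαβ hαβ, div_pow, mul_pow, hV]
  field_simp

theorem stmt_0 (α β x y : ℂ)
    (hα0 : α^2 ≠ 0) (hα1 : α^2 ≠ 1) (hβ0 : β^2 ≠ 0) (hβ1 : β^2 ≠ 1)
    (hαβ : α^2 ≠ β^2) (hαβ1 : α^2 * β^2 ≠ 1)
    (hV : y^2 = x * (x - 1) * (x - α^2) * (x - β^2) * (x - α^2 * β^2))
    (hx : x ≠ α * β) :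
    ((α - β)^2 * y / ((α * β - 1) * (x - α * β)^3))^2 =
      ((α - β)^2 * x / (x - α * β)^2) *
      ((α - β)^2 * x / (x - α * β)^2 - 1) *
      ((α - β)^2 * x / (x - α * β)^2 - (α - β)^2 / (α * β - 1)^2) :=
  stmt_0_general α β x y hαβ1 hV hx
end

section
/- Let α, β ∈ ℂ satisfy α² ∉ {0,1}, β² ∉ {0,1}, α² ≠ β², and α²β² ≠ 1. If (x, y) ∈ ℂ² satisfies y² = x(x−1)(x−α²)(x−β²)(x−α²β²) and x ≠ −αβ, then the point (X, Y) with X = (α+β)²x/(x+αβ)² and Y = −(α+β)²y/((αβ+1)(x+αβ)³) satisfies Y² = X(X−1)(X − (α+β)²/(αβ+1)²). -/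
/-!
With `d = x + αβ`, the two quadratic identities
`d² - (α+β)² x = (x - α²)(x - β²)` and `d² - (αβ+1)² x = (x - 1)(x - α²β²)`
show that `X - 1` and `X - (α+β)²/(αβ+1)²` are, up to the factor `-1/d²`, the quadratic
factors of the quintic defining `V`; multiplying by `X = (α+β)² x / d²` recovers that quintic,
hence `y²`, divided by `(αβ+1)² d⁶`.
-/

section Descent

variable {K : Type*} [Field K]

theorem sq_add_mul_sub_sq_add_mul (a b x : K) :
    (x + a * b) ^ 2 - (a + b) ^ 2 * x = (x - a ^ 2) * (x - b ^ 2) := by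
  ring

theorem sq_add_mul_sub_sq_mul_add_one (a b x : K) :
    (x + a * b) ^ 2 - (a * b + 1) ^ 2 * x = (x - 1) * (x - a ^ 2 * b ^ 2) := by
  ring

variable {a b x : K}

theorem descent_sub_one (hd : x + a * b ≠ 0) :
    (a + b) ^ 2 * x / (x + a * b) ^ 2 - 1 = -((x - a ^ 2) * (x - b ^ 2)) / (x + a * b) ^ 2 := by
  rw [← sq_add_mul_sub_sq_add_mul]
  field_simp
  ring

theorem descent_sub_const (hd : x + a * b ≠ 0) (h1 : a * b + 1 ≠ 0) :
    (a + b) ^ 2 * x / (x + a * b) ^ 2 - (a + b) ^ 2 / (a * b + 1) ^ 2 =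
      -((a + b) ^ 2 * ((x - 1) * (x - a ^ 2 * b ^ 2))) / ((a * b + 1) ^ 2 * (x + a * b) ^ 2) := by
  rw [← sq_add_mul_sub_sq_mul_add_one]
  field_simp
  ring

theorem descent_mem_curve {y : K} (hd : x + a * b ≠ 0) (h1 : a * b + 1 ≠ 0)
    (hV : y ^ 2 = x * (x - 1) * (x - a ^ 2) * (x - b ^ 2) * (x - a ^ 2 * b ^ 2)) :
    (-((a + b) ^ 2 * y) / ((a * b + 1) * (x + a * b) ^ 3)) ^ 2 =
      ((a + b) ^ 2 * x / (x + a * b) ^ 2) *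
      ((a + b) ^ 2 * x / (x + a * b) ^ 2 - 1) *
      ((a + b) ^ 2 * x / (x + a * b) ^ 2 - (a + b) ^ 2 / (a * b + 1) ^ 2) := by
  rw [descent_sub_one hd, descent_sub_const hd h1, div_pow, neg_sq, mul_pow, hV]
  field_simp

end Descent

theorem stmt_1_general (α β x y : ℂ)
    (hαβ1 : α^2 * β^2 ≠ 1)
    (hV : y^2 = x * (x - 1) * (x - α^2) * (x - β^2) * (x - α^2 * β^2))
    (hx : x ≠ -(α * β)) :
    (-((α + β)^2 * y) / ((α * β + 1) * (x + α * β)^3))^2 =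
      ((α + β)^2 * x / (x + α * β)^2) *
      ((α + β)^2 * x / (x + α * β)^2 - 1) *
      ((α + β)^2 * x / (x + α * β)^2 - (α + β)^2 / (α * β + 1)^2) := by
  have hd : x + α * β ≠ 0 := fun h => hx (eq_neg_of_add_eq_zero_left h)
  have h1 : α * β + 1 ≠ 0 := fun h => hαβ1 (by linear_combination (α * β - 1) * h)
  exact descent_mem_curve hd h1 hV

theorem stmt_1 (α β x y : ℂ)
    (hα0 : α^2 ≠ 0) (hα1 : α^2 ≠ 1) (hβ0 : β^2 ≠ 0) (hβ1 : β^2 ≠ 1)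
    (hαβ : α^2 ≠ β^2) (hαβ1 : α^2 * β^2 ≠ 1)
    (hV : y^2 = x * (x - 1) * (x - α^2) * (x - β^2) * (x - α^2 * β^2))
    (hx : x ≠ -(α * β)) :
    (-((α + β)^2 * y) / ((α * β + 1) * (x + α * β)^3))^2 =
      ((α + β)^2 * x / (x + α * β)^2) *
      ((α + β)^2 * x / (x + α * β)^2 - 1) *
      ((α + β)^2 * x / (x + α * β)^2 - (α + β)^2 / (α * β + 1)^2) :=
  stmt_1_general α β x y hαβ1 hV hx
end

section
/- Let e₁, e₂ ∈ ℂ with e₁² ∉ {0,1}, e₂² ∉ {0,1}, e₁² ≠ e₂², and let β₀ ∈ ℂ with β₀² = (e₁−1)(e₂+1)/((e₁+1)(e₂−1)) and α₀ ∈ ℂ with α₀² = (e₁+1)(e₂+1)/((e₁−1)(e₂−1)), and let r ∈ ℂ with r² = e₁² − 1. If (s, t) ∈ ℂ² satisfies t² = (s²−1)(s²−e₁²)(s²−e₂²) and s ≠ 1, then the point (x, y) with x = (e₂+1)(s+1)/((e₂−1)(s−1)) and y = 4(e₂+1)²t/((e₂−1)³ r (s−1)³) satisfies y² = x(x−1)(x−α₀²)(x−β₀²)(x−α₀²β₀²).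 -/
/-! The map is induced by the Möbius transformation `m z = c (z + 1) / (z - 1)` with
`c = (e₂ + 1) / (e₂ - 1)`, which sends the branch points `1, -1, -e₂, e₁, -e₁, e₂` of `H'` to the
branch points `∞, 0, 1, α₀², β₀², α₀² β₀² = c²` of `V`. Since each difference `m s - m a` is
`(a - s)` times a constant over `(s - 1)`, the quintic evaluated at `m s` is, up to the factor
`(s - 1)⁻⁶`, the sextic of `H'` evaluated at `s`; the constant is matched by `r² = e₁² - 1`. -/

theorem mobius_sub_mobius {K : Type*} [Field K] (c : K) {a s : K} (ha : a ≠ 1) (hs : s ≠ 1) :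
    c * (s + 1) / (s - 1) - c * (a + 1) / (a - 1) = 2 * c * (a - s) / ((s - 1) * (a - 1)) := by
  field_simp
  ring

theorem mobius_quintic_eq {K : Type*} [Field K] (c : K) {a b s : K} (ha : a ^ 2 ≠ 1)
    (hb : b ^ 2 ≠ 1) (hs : s ≠ 1) :
    c * (s + 1) / (s - 1) *
      (c * (s + 1) / (s - 1) - c * (-b + 1) / (-b - 1)) *
      (c * (s + 1) / (s - 1) - c * (a + 1) / (a - 1)) *
      (c * (s + 1) / (s - 1) - c * (-a + 1) / (-a - 1)) *
      (c * (s + 1) / (s - 1) - c * (b + 1) / (b - 1)) =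
    16 * c ^ 5 * (s + 1) * (s ^ 2 - a ^ 2) * (s ^ 2 - b ^ 2) /
      ((s - 1) ^ 5 * (a ^ 2 - 1) * (b ^ 2 - 1)) := by
  obtain ⟨ha₁, ha₁'⟩ := sq_ne_one_iff.mp ha
  obtain ⟨hb₁, hb₁'⟩ := sq_ne_one_iff.mp hb
  have ha' : -a ≠ 1 := mt neg_eq_iff_eq_neg.mp ha₁'
  have hb' : -b ≠ 1 := mt neg_eq_iff_eq_neg.mp hb₁'
  rw [mobius_sub_mobius c hb' hs, mobius_sub_mobius c ha₁ hs, mobius_sub_mobius c ha' hs,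
    mobius_sub_mobius c hb₁ hs]
  field_simp
  ring

theorem stmt_2_general (e₁ e₂ α₀ β₀ r s t : ℂ)
    (he11 : e₁^2 ≠ 1) (he21 : e₂^2 ≠ 1)
    (hβ : β₀^2 = (e₁ - 1) * (e₂ + 1) / ((e₁ + 1) * (e₂ - 1)))
    (hα : α₀^2 = (e₁ + 1) * (e₂ + 1) / ((e₁ - 1) * (e₂ - 1)))
    (hr : r^2 = e₁^2 - 1)
    (hH : t^2 = (s^2 - 1) * (s^2 - e₁^2) * (s^2 - e₂^2))
    (hs : s ≠ 1) :
    (4 * (e₂ + 1)^2 * t / ((e₂ - 1)^3 * r * (s - 1)^3))^2 =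
      ((e₂ + 1) * (s + 1) / ((e₂ - 1) * (s - 1))) *
      ((e₂ + 1) * (s + 1) / ((e₂ - 1) * (s - 1)) - 1) *
      ((e₂ + 1) * (s + 1) / ((e₂ - 1) * (s - 1)) - α₀^2) *
      ((e₂ + 1) * (s + 1) / ((e₂ - 1) * (s - 1)) - β₀^2) *
      ((e₂ + 1) * (s + 1) / ((e₂ - 1) * (s - 1)) - α₀^2 * β₀^2) := by
  obtain ⟨he₁, he₁'⟩ := sq_ne_one_iff.mp he11
  obtain ⟨he₂, he₂'⟩ := sq_ne_one_iff.mp he21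
  have : e₁ + 1 ≠ 0 := fun h => he₁' (eq_neg_of_add_eq_zero_left h)
  have : e₂ + 1 ≠ 0 := fun h => he₂' (eq_neg_of_add_eq_zero_left h)
  have : -e₁ - 1 ≠ 0 := sub_ne_zero.mpr (mt neg_eq_iff_eq_neg.mp he₁')
  have : -e₂ - 1 ≠ 0 := sub_ne_zero.mpr (mt neg_eq_iff_eq_neg.mp he₂')
  have : r ≠ 0 := by rintro rfl; exact he11 (by linear_combination -hr)
  obtain ⟨c, hc⟩ : ∃ c, c = (e₂ + 1) / (e₂ - 1) := ⟨_, rfl⟩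
  have hx : c * (s + 1) / (s - 1) = (e₂ + 1) * (s + 1) / ((e₂ - 1) * (s - 1)) := by
    rw [hc, div_mul_eq_mul_div, div_div]
  have hone : c * (-e₂ + 1) / (-e₂ - 1) = 1 := by rw [hc]; field_simp; ring
  have hα' : c * (e₁ + 1) / (e₁ - 1) = α₀^2 := by rw [hα, hc]; field_simp
  have hβ' : c * (-e₁ + 1) / (-e₁ - 1) = β₀^2 := by rw [hβ, hc]; field_simp; ring
  have hαβ : c * (e₂ + 1) / (e₂ - 1) = α₀^2 * β₀^2 := by rw [hα, hβ, hc]; field_simp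
  calc (4 * (e₂ + 1)^2 * t / ((e₂ - 1)^3 * r * (s - 1)^3))^2
      = 16 * c ^ 5 * (s + 1) * (s ^ 2 - e₁ ^ 2) * (s ^ 2 - e₂ ^ 2) /
          ((s - 1) ^ 5 * (e₁ ^ 2 - 1) * (e₂ ^ 2 - 1)) := by
        rw [hc]
        field_simp
        linear_combination
          16 * (e₂^2 - 1) * ((e₁^2 - 1) * hH - (s^2 - 1) * (s^2 - e₁^2) * (s^2 - e₂^2) * hr)
    _ = _ := (mobius_quintic_eq c he11 he21 hs).symm
    _ = _ := by rw [hx, hone, hα', hβ', hαβ]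

theorem stmt_2 (e₁ e₂ α₀ β₀ r s t : ℂ)
    (he10 : e₁^2 ≠ 0) (he11 : e₁^2 ≠ 1) (he20 : e₂^2 ≠ 0) (he21 : e₂^2 ≠ 1)
    (he12 : e₁^2 ≠ e₂^2)
    (hβ : β₀^2 = (e₁ - 1) * (e₂ + 1) / ((e₁ + 1) * (e₂ - 1)))
    (hα : α₀^2 = (e₁ + 1) * (e₂ + 1) / ((e₁ - 1) * (e₂ - 1)))
    (hr : r^2 = e₁^2 - 1)
    (hH : t^2 = (s^2 - 1) * (s^2 - e₁^2) * (s^2 - e₂^2))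
    (hs : s ≠ 1) :
    (4 * (e₂ + 1)^2 * t / ((e₂ - 1)^3 * r * (s - 1)^3))^2 =
      ((e₂ + 1) * (s + 1) / ((e₂ - 1) * (s - 1))) *
      ((e₂ + 1) * (s + 1) / ((e₂ - 1) * (s - 1)) - 1) *
      ((e₂ + 1) * (s + 1) / ((e₂ - 1) * (s - 1)) - α₀^2) *
      ((e₂ + 1) * (s + 1) / ((e₂ - 1) * (s - 1)) - β₀^2) *
      ((e₂ + 1) * (s + 1) / ((e₂ - 1) * (s - 1)) - α₀^2 * β₀^2) :=
  stmt_2_general e₁ e₂ α₀ β₀ r s t he11 he21 hβ hα hr hH hs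
end

section
/- Let α, β ∈ ℂ satisfy α² ∉ {0,1}, β² ∉ {0,1}, α² ≠ β², α²β² ≠ 1, and let ρ ∈ ℂ with ρ² = αβ. If (x, y) ∈ ℂ² satisfies y² = x(x−1)(x−α²)(x−β²)(x−α²β²), and x ≠ αβ, then the point (s, t) with s = (x+αβ)/(x−αβ) and t = 8αβ·ρ·y/((αβ−1)(α−β)(x−αβ)³) satisfies t² = (s²−1)(s²−e₁²)(s²−e₂²), where e₁ = (α+β)/(α−β) and e₂ = (αβ+1)/(αβ−1). -/
/-!
With `c = α β` and `s = (x + c) / (x - c)`, each factor `s² - e²` is a difference of squares whose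
two linear factors in `x` vanish at two of the branch points of `V`:
`s² - 1 = 4 c x / (x - c)²`, `s² - e₁² = -4 c (x - α²) (x - β²) / ((x - c)² (α - β)²)` and
`s² - e₂² = -4 c (x - 1) (x - c²) / ((x - c)² (c - 1)²)`. Their product is
`64 c³ x (x - 1) (x - α²) (x - β²) (x - c²) / ((x - c)⁶ (α - β)² (c - 1)²)`, which is `t²`
because `y²` is the quintic and `ρ² = c`.
-/

section MoebiusFactors

variable {K : Type*} [Field K]

theorem moebius_sq_sub_one {c x : K} (hx : x - c ≠ 0) :
    ((x + c) / (x - c)) ^ 2 - 1 = 4 * c * x / (x - c) ^ 2 := by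
  field_simp
  ring

theorem moebius_sq_sub_sq_add_div_sub {α β x : K} (hx : x - α * β ≠ 0) (hαβ : α - β ≠ 0) :
    ((x + α * β) / (x - α * β)) ^ 2 - ((α + β) / (α - β)) ^ 2 =
      -4 * (α * β) * (x - α ^ 2) * (x - β ^ 2) / ((x - α * β) ^ 2 * (α - β) ^ 2) := by
  field_simp
  ring

theorem moebius_sq_sub_sq_add_one_div_sub_one {c x : K} (hx : x - c ≠ 0) (hc : c - 1 ≠ 0) :
    ((x + c) / (x - c)) ^ 2 - ((c + 1) / (c - 1)) ^ 2 =
      -4 * c * (x - 1) * (x - c ^ 2) / ((x - c) ^ 2 * (c - 1) ^ 2) := by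
  field_simp
  ring

end MoebiusFactors

theorem stmt_3_general (α β ρ x y : ℂ)
    (hαβ : α^2 ≠ β^2) (hαβ1 : α^2 * β^2 ≠ 1)
    (hρ : ρ^2 = α * β)
    (hV : y^2 = x * (x - 1) * (x - α^2) * (x - β^2) * (x - α^2 * β^2))
    (hx : x ≠ α * β) :
    (8 * (α * β) * ρ * y / ((α * β - 1) * (α - β) * (x - α * β)^3))^2 =
      (((x + α * β) / (x - α * β))^2 - 1) *
      (((x + α * β) / (x - α * β))^2 - ((α + β) / (α - β))^2) *
      (((x + α * β) / (x - α * β))^2 - ((α * β + 1) / (α * β - 1))^2) := by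
  have hαβ' : α - β ≠ 0 := sub_ne_zero.mpr fun h => hαβ (by rw [h])
  have hc : α * β - 1 ≠ 0 := sub_ne_zero.mpr fun h => hαβ1 (by rw [← mul_pow, h, one_pow])
  have hx' : x - α * β ≠ 0 := sub_ne_zero.mpr hx
  rw [moebius_sq_sub_one hx', moebius_sq_sub_sq_add_div_sub hx' hαβ',
    moebius_sq_sub_sq_add_one_div_sub_one hx' hc, div_pow, mul_pow, mul_pow, hρ, hV]
  field_simp
  ring

theorem stmt_3 (α β ρ x y : ℂ)
    (hα0 : α^2 ≠ 0) (hα1 : α^2 ≠ 1) (hβ0 : β^2 ≠ 0) (hβ1 : β^2 ≠ 1)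
    (hαβ : α^2 ≠ β^2) (hαβ1 : α^2 * β^2 ≠ 1)
    (hρ : ρ^2 = α * β)
    (hV : y^2 = x * (x - 1) * (x - α^2) * (x - β^2) * (x - α^2 * β^2))
    (hx : x ≠ α * β) :
    (8 * (α * β) * ρ * y / ((α * β - 1) * (α - β) * (x - α * β)^3))^2 =
      (((x + α * β) / (x - α * β))^2 - 1) *
      (((x + α * β) / (x - α * β))^2 - ((α + β) / (α - β))^2) *
      (((x + α * β) / (x - α * β))^2 - ((α * β + 1) / (α * β - 1))^2) :=
  stmt_3_general α β ρ x y hαβ hαβ1 hρ hV hx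
end

section
/- Let α, β ∈ ℂ satisfy α² ∉ {0,1}, β² ∉ {0,1}, α² ≠ β², α²β² ≠ 1, and let ρ ∈ ℂ with ρ² = αβ. Set e₁ = (α+β)/(α−β) and e₂ = (αβ+1)/(αβ−1). If (s, t) satisfies t² = (s−1)(s−e₁²)(s−e₂²), then the point (X, Y) with X = (α−β)²(s−1)/(4αβ) and Y = (α−β)³t/(8αβρ) satisfies Y² = X(X−1)(X − (α−β)²/(αβ−1)²). -/
/-!
With `λ = (α - β)² / (4αβ)` the map is `X = λ (s - 1)`, `Y = λ^{3/2} t` (as `ρ² = αβ`), so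
`Y² = λ³ t²`. Rescaling the cubic by `λ` moves its roots `1, e₁², e₂²` to `0, λ (e₁² - 1), λ (e₂² - 1)`,
and these are `1` and `(α - β)² / (αβ - 1)²` because `(a + b)² - (a - b)² = 4ab`.
-/

section

variable {K : Type*} [Field K]

theorem sq_add_div_sub (a b : K) (h : a - b ≠ 0) :
    ((a + b) / (a - b)) ^ 2 = 1 + 4 * (a * b) / (a - b) ^ 2 := by
  field_simp
  ring

theorem sq_cube_mul_div_of_sq_eq (d c ρ t : K) (hρ : ρ ^ 2 = c) :
    (d ^ 3 * t / (8 * c * ρ)) ^ 2 = (d ^ 2 / (4 * c)) ^ 3 * t ^ 2 := by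
  rw [div_pow, div_pow, mul_pow, mul_pow, mul_pow, hρ]
  ring

theorem cubic_rescale_at_one (l μ s : K) (hl : l ≠ 0) :
    l ^ 3 * ((s - 1) * (s - (1 + l⁻¹)) * (s - (1 + μ / l))) =
      l * (s - 1) * (l * (s - 1) - 1) * (l * (s - 1) - μ) := by
  field_simp
  ring

end

theorem stmt_4_general (α β ρ s t : ℂ)
    (hα0 : α^2 ≠ 0) (hβ0 : β^2 ≠ 0)
    (hαβ : α^2 ≠ β^2) (hαβ1 : α^2 * β^2 ≠ 1)
    (hρ : ρ^2 = α * β)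
    (hW : t^2 = (s - 1) * (s - ((α + β) / (α - β))^2) * (s - ((α * β + 1) / (α * β - 1))^2)) :
    ((α - β)^3 * t / (8 * (α * β) * ρ))^2 =
      ((α - β)^2 * (s - 1) / (4 * (α * β))) *
      ((α - β)^2 * (s - 1) / (4 * (α * β)) - 1) *
      ((α - β)^2 * (s - 1) / (4 * (α * β)) - (α - β)^2 / (α * β - 1)^2) := by
  have hd : α - β ≠ 0 := sub_ne_zero.mpr fun h => hαβ (by rw [h])
  have hc : α * β ≠ 0 := mul_ne_zero (pow_ne_zero_iff two_ne_zero |>.mp hα0)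
    (pow_ne_zero_iff two_ne_zero |>.mp hβ0)
  have hc1 : α * β - 1 ≠ 0 := sub_ne_zero.mpr fun h => hαβ1 (by rw [← mul_pow, h, one_pow])
  set l := (α - β) ^ 2 / (4 * (α * β)) with hl_def
  have hl : l ≠ 0 := div_ne_zero (pow_ne_zero 2 hd) (mul_ne_zero (by norm_num) hc)
  have he₁ : ((α + β) / (α - β)) ^ 2 = 1 + l⁻¹ := by
    rw [sq_add_div_sub α β hd, hl_def, inv_div]
  have he₂ : ((α * β + 1) / (α * β - 1)) ^ 2 = 1 + (α - β) ^ 2 / (α * β - 1) ^ 2 / l := by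
    rw [sq_add_div_sub _ _ hc1, hl_def, mul_one]
    field_simp
  rw [sq_cube_mul_div_of_sq_eq _ _ _ _ hρ, hW, he₁, he₂, cubic_rescale_at_one l _ s hl]
  ring

theorem stmt_4 (α β ρ s t : ℂ)
    (hα0 : α^2 ≠ 0) (hα1 : α^2 ≠ 1) (hβ0 : β^2 ≠ 0) (hβ1 : β^2 ≠ 1)
    (hαβ : α^2 ≠ β^2) (hαβ1 : α^2 * β^2 ≠ 1)
    (hρ : ρ^2 = α * β)
    (hW : t^2 = (s - 1) * (s - ((α + β) / (α - β))^2) * (s - ((α * β + 1) / (α * β - 1))^2)) :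
    ((α - β)^3 * t / (8 * (α * β) * ρ))^2 =
      ((α - β)^2 * (s - 1) / (4 * (α * β))) *
      ((α - β)^2 * (s - 1) / (4 * (α * β)) - 1) *
      ((α - β)^2 * (s - 1) / (4 * (α * β)) - (α - β)^2 / (α * β - 1)^2) :=
  stmt_4_general α β ρ s t hα0 hβ0 hαβ hαβ1 hρ hW
end

section
/- Let α, β ∈ ℂ satisfy α² ∉ {0,1}, β² ∉ {0,1}, α² ≠ β², α²β² ≠ 1, and let κ₁ ∈ ℂ with κ₁² = −(α−β)²/((1−α²)(1−β²)) and let r ∈ ℂ with r² = (1−α²)(1−β²). If (X, Y) satisfies Y² = X(X−1)(X − (α−β)²/(αβ−1)²) and X ≠ 1, then the point (X₊, Y₊) with X₊ = X/(κ₁²(X−1)) and Y₊ = (1−αβ)·r·Y/((α−β)²(X−1)²) satisfies Y₊² = X₊(1−X₊)(1−κ₁²X₊). -/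
/-! With `λ = (α - β)² / (αβ - 1)²`, the identity `(αβ - 1)² - (α - β)² = (1 - α²)(1 - β²)` gives
`κ₁² = λ / (λ - 1)` and `((1 - αβ) r / (α - β)²)² = (1 - λ) / λ²`, so the claim is the classical
change of variables `X₊ = X (λ - 1) / (λ (X - 1))` from the Legendre form `Y² = X (X - 1) (X - λ)`
to the Jacobi form with modulus `k² = λ / (λ - 1)`. -/

theorem jacobi_eq_of_legendre {K : Type*} [Field K] {l k c x y : K}
    (hk : k ^ 2 * (l - 1) = l) (hc : c ^ 2 * l ^ 2 = 1 - l)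
    (hy : y ^ 2 = x * (x - 1) * (x - l)) (hx : x ≠ 1) :
    (c * y / (x - 1) ^ 2) ^ 2 =
      x / (k ^ 2 * (x - 1)) * (1 - x / (k ^ 2 * (x - 1))) *
        (1 - k ^ 2 * (x / (k ^ 2 * (x - 1)))) := by
  have hl0 : l ≠ 0 := by rintro rfl; simp at hc
  have hl1 : l - 1 ≠ 0 := by
    intro h; rw [h, mul_zero] at hk; exact hl0 hk.symm
  have hx1 : x - 1 ≠ 0 := sub_ne_zero.mpr hx
  rw [div_pow, mul_pow, hy, eq_div_of_mul_eq (pow_ne_zero 2 hl0) hc, eq_div_of_mul_eq hl1 hk]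
  field_simp
  ring

theorem stmt_5_general (α β κ₁ r X Y : ℂ)
    (hα1 : α^2 ≠ 1) (hβ1 : β^2 ≠ 1)
    (hαβ : α^2 ≠ β^2) (hαβ1 : α^2 * β^2 ≠ 1)
    (hκ : κ₁^2 = -((α - β)^2) / ((1 - α^2) * (1 - β^2)))
    (hr : r^2 = (1 - α^2) * (1 - β^2))
    (hE : Y^2 = X * (X - 1) * (X - (α - β)^2 / (α * β - 1)^2))
    (hX : X ≠ 1) :
    ((1 - α * β) * r * Y / ((α - β)^2 * (X - 1)^2))^2 =
      (X / (κ₁^2 * (X - 1))) * (1 - X / (κ₁^2 * (X - 1))) *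
      (1 - κ₁^2 * (X / (κ₁^2 * (X - 1)))) := by
  have hα : 1 - α ^ 2 ≠ 0 := sub_ne_zero.mpr hα1.symm
  have hβ : 1 - β ^ 2 ≠ 0 := sub_ne_zero.mpr hβ1.symm
  have hsub : α - β ≠ 0 := fun h => hαβ (by linear_combination (α + β) * h)
  have hmul : α * β - 1 ≠ 0 := fun h => hαβ1 (by linear_combination (α * β + 1) * h)
  set l := (α - β) ^ 2 / (α * β - 1) ^ 2
  have hk : κ₁ ^ 2 * (l - 1) = l := by
    rw [hκ]; simp only [l]; field_simp; ring
  have hc : ((1 - α * β) * r / (α - β) ^ 2) ^ 2 * l ^ 2 = 1 - l := by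
    simp only [l]; field_simp; rw [hr]; ring
  rw [← div_div, ← div_mul_eq_mul_div]
  exact jacobi_eq_of_legendre hk hc hE hX

theorem stmt_5 (α β κ₁ r X Y : ℂ)
    (hα0 : α^2 ≠ 0) (hα1 : α^2 ≠ 1) (hβ0 : β^2 ≠ 0) (hβ1 : β^2 ≠ 1)
    (hαβ : α^2 ≠ β^2) (hαβ1 : α^2 * β^2 ≠ 1)
    (hκ : κ₁^2 = -((α - β)^2) / ((1 - α^2) * (1 - β^2)))
    (hr : r^2 = (1 - α^2) * (1 - β^2))
    (hE : Y^2 = X * (X - 1) * (X - (α - β)^2 / (α * β - 1)^2))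
    (hX : X ≠ 1) :
    ((1 - α * β) * r * Y / ((α - β)^2 * (X - 1)^2))^2 =
      (X / (κ₁^2 * (X - 1))) * (1 - X / (κ₁^2 * (X - 1))) *
      (1 - κ₁^2 * (X / (κ₁^2 * (X - 1)))) :=
  stmt_5_general α β κ₁ r X Y hα1 hβ1 hαβ hαβ1 hκ hr hE hX
end

section
/- Let α, β ∈ ℂ satisfy α² ∉ {0,1}, β² ∉ {0,1}, α² ≠ β², α²β² ≠ 1, and let r ∈ ℂ with r² = (1−α²)(1−β²). For (x,y) on the curve y² = x(x−1)(x−α²)(x−β²)(x−α²β²) with x ∉ {α², β², αβ}, the composition of φ₁(x,y) = ((α−β)²x/(x−αβ)², (α−β)²y/((αβ−1)(x−αβ)³)) followed by ξ₊(X,Y) = (X/(κ₁²(X−1)), (1−αβ)rY/((α−β)²(X−1)²)), where κ₁² = −(α−β)²/((1−α²)(1−β²)), equals π₊(x,y) = ((1−α²)(1−β²)x/((x−α²)(x−β²)), −r(x−αβ)y/((x−α²)²(x−β²)²)). -/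
/-! Everything hinges on `X - 1 = -(x - α²)(x - β²) / (x - αβ)²` for `X = (α - β)² x / (x - αβ)²`,
i.e. on the polynomial identity `(α - β)² x - (x - αβ)² = -(x - α²)(x - β²)`: it turns the
denominators `X - 1` of `ξ₊` into those of `π₊`, after which both coordinates are identities of
rational functions. -/

theorem sq_sub_mul_sub_sq_mul {R : Type*} [CommRing R] (a b x : R) :
    (a - b) ^ 2 * x - (x - a * b) ^ 2 = -((x - a ^ 2) * (x - b ^ 2)) := by
  ring

section

variable {K : Type*} [Field K] {a b x : K}

theorem sq_sub_mul_div_sub_one (hx : x ≠ a * b) :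
    (a - b) ^ 2 * x / (x - a * b) ^ 2 - 1 = -((x - a ^ 2) * (x - b ^ 2)) / (x - a * b) ^ 2 := by
  have hxab : (x - a * b) ^ 2 ≠ 0 := pow_ne_zero 2 (sub_ne_zero.mpr hx)
  rw [div_sub_one hxab, sq_sub_mul_sub_sq_mul]

theorem xi_comp_phi_fst (hab : a ^ 2 ≠ b ^ 2) (ha : a ^ 2 ≠ 1) (hb : b ^ 2 ≠ 1)
    (hx : x ≠ a * b) :
    (a - b) ^ 2 * x / (x - a * b) ^ 2 /
        (-((a - b) ^ 2) / ((1 - a ^ 2) * (1 - b ^ 2)) * ((a - b) ^ 2 * x / (x - a * b) ^ 2 - 1)) =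
      (1 - a ^ 2) * (1 - b ^ 2) * x / ((x - a ^ 2) * (x - b ^ 2)) := by
  have hab' : a - b ≠ 0 := sub_ne_zero.mpr (ne_of_apply_ne (· ^ 2) hab)
  have hxab : x - a * b ≠ 0 := sub_ne_zero.mpr hx
  have ha' : 1 - a ^ 2 ≠ 0 := sub_ne_zero.mpr ha.symm
  have hb' : 1 - b ^ 2 ≠ 0 := sub_ne_zero.mpr hb.symm
  rw [sq_sub_mul_div_sub_one hx]
  field_simp

theorem xi_comp_phi_snd (hab : a ^ 2 ≠ b ^ 2) (hab1 : a ^ 2 * b ^ 2 ≠ 1)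
    (hxa : x ≠ a ^ 2) (hxb : x ≠ b ^ 2) (hx : x ≠ a * b) (r y : K) :
    (1 - a * b) * r * ((a - b) ^ 2 * y / ((a * b - 1) * (x - a * b) ^ 3)) /
        ((a - b) ^ 2 * ((a - b) ^ 2 * x / (x - a * b) ^ 2 - 1) ^ 2) =
      -(r * (x - a * b) * y) / ((x - a ^ 2) ^ 2 * (x - b ^ 2) ^ 2) := by
  have hab' : a - b ≠ 0 := sub_ne_zero.mpr (ne_of_apply_ne (· ^ 2) hab)
  have hab1' : a * b - 1 ≠ 0 := fun h => hab1 (by linear_combination (a * b + 1) * h)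
  have hxab : x - a * b ≠ 0 := sub_ne_zero.mpr hx
  have hxa' : x - a ^ 2 ≠ 0 := sub_ne_zero.mpr hxa
  have hxb' : x - b ^ 2 ≠ 0 := sub_ne_zero.mpr hxb
  rw [sq_sub_mul_div_sub_one hx]
  field_simp
  ring

end

theorem stmt_6_general (α β κ₁ r x y : ℂ)
    (hα1 : α^2 ≠ 1) (hβ1 : β^2 ≠ 1)
    (hαβ : α^2 ≠ β^2) (hαβ1 : α^2 * β^2 ≠ 1)
    (hκ : κ₁^2 = -((α - β)^2) / ((1 - α^2) * (1 - β^2)))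
    (hx1 : x ≠ α^2) (hx2 : x ≠ β^2) (hx3 : x ≠ α * β) :
    (let X := (α - β)^2 * x / (x - α * β)^2;
     let Y := (α - β)^2 * y / ((α * β - 1) * (x - α * β)^3);
     (X / (κ₁^2 * (X - 1)), (1 - α * β) * r * Y / ((α - β)^2 * (X - 1)^2))) =
    ((1 - α^2) * (1 - β^2) * x / ((x - α^2) * (x - β^2)),
     -(r * (x - α * β) * y) / ((x - α^2)^2 * (x - β^2)^2)) := by
  rw [hκ]
  exact Prod.ext (xi_comp_phi_fst hαβ hα1 hβ1 hx3) (xi_comp_phi_snd hαβ hαβ1 hx1 hx2 hx3 r y)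

theorem stmt_6 (α β κ₁ r x y : ℂ)
    (hα0 : α^2 ≠ 0) (hα1 : α^2 ≠ 1) (hβ0 : β^2 ≠ 0) (hβ1 : β^2 ≠ 1)
    (hαβ : α^2 ≠ β^2) (hαβ1 : α^2 * β^2 ≠ 1)
    (hκ : κ₁^2 = -((α - β)^2) / ((1 - α^2) * (1 - β^2)))
    (hr : r^2 = (1 - α^2) * (1 - β^2))
    (hV : y^2 = x * (x - 1) * (x - α^2) * (x - β^2) * (x - α^2 * β^2))
    (hx1 : x ≠ α^2) (hx2 : x ≠ β^2) (hx3 : x ≠ α * β) :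
    (let X := (α - β)^2 * x / (x - α * β)^2;
     let Y := (α - β)^2 * y / ((α * β - 1) * (x - α * β)^3);
     (X / (κ₁^2 * (X - 1)), (1 - α * β) * r * Y / ((α - β)^2 * (X - 1)^2))) =
    ((1 - α^2) * (1 - β^2) * x / ((x - α^2) * (x - β^2)),
     -(r * (x - α * β) * y) / ((x - α^2)^2 * (x - β^2)^2)) :=
  stmt_6_general α β κ₁ r x y hα1 hβ1 hαβ hαβ1 hκ hx1 hx2 hx3
end

section
/- Let α, β ∈ ℂ satisfy α² ∉ {0,1}, β² ∉ {0,1}, α² ≠ β², α²β² ≠ 1. For (X, Y) ∈ ℂ² with Y² = X(X−1)(X − (α−β)²/(αβ−1)²), X ≠ 0, and any choice of square root s of 4αβX + (α−β)², the two points (x₁, y₁), (x₂, y₂) given by x_{1,2} = αβ + (α−β)(α−β ± s)/(2X) and y_{1,2} = (αβ−1)(α−β)Y(α−β ± s)³/(8X³) both satisfy y² = x(x−1)(x−α²)(x−β²)(x−α²β²), and moreover x₁ x₂ = α²β² and (α−β)²x₁/(x₁−αβ)² = X. -/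
/-!
Write `d = α - β`, `c = α β`, `m = α β - 1`. Since `d² + 2c = α² + β²` and `m² + 2c = 1 + α²β²`,
`d² x - (x - c)² = -(x - α²)(x - β²)` and `m² x - (x - c)² = -(x - 1)(x - α²β²)`; hence `φ₁` pulls the
cubic of `E₁` back to the quintic of `V`, up to the square factor `(d² / (m (x - c)³))²`.
So it suffices to check that `(x₁, y₁)` and `(x₂, y₂)` are mapped to `(X, Y)` by `φ₁`. With `t = d ± s`
the hypothesis on `s` reads `t² - 2 d t = 4 c X`, and then `x = c + d t / (2X)` satisfies
`d² x / (x - c)² = X`.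
-/

variable {K : Type*} [Field K]

section Phi1

variable (α β : K)

def phi1X (x : K) : K := (α - β) ^ 2 * x / (x - α * β) ^ 2

def phi1Y (x y : K) : K := (α - β) ^ 2 * y / ((α * β - 1) * (x - α * β) ^ 3)

variable {α β}

theorem cubic_phi1X_eq {x : K} (hm : α * β - 1 ≠ 0) (hx : x - α * β ≠ 0) :
    phi1X α β x * (phi1X α β x - 1) * (phi1X α β x - (α - β) ^ 2 / (α * β - 1) ^ 2) =
      ((α - β) ^ 2 / ((α * β - 1) * (x - α * β) ^ 3)) ^ 2 *
        (x * (x - 1) * (x - α ^ 2) * (x - β ^ 2) * (x - α ^ 2 * β ^ 2)) := by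
  unfold phi1X
  field_simp
  ring

theorem quintic_eq_of_phi1_mem_e1 {x y : K} (hd : α - β ≠ 0) (hm : α * β - 1 ≠ 0)
    (hx : x - α * β ≠ 0)
    (h : phi1Y α β x y ^ 2 =
      phi1X α β x * (phi1X α β x - 1) * (phi1X α β x - (α - β) ^ 2 / (α * β - 1) ^ 2)) :
    y ^ 2 = x * (x - 1) * (x - α ^ 2) * (x - β ^ 2) * (x - α ^ 2 * β ^ 2) := by
  set k := (α - β) ^ 2 / ((α * β - 1) * (x - α * β) ^ 3)
  have hk : k ≠ 0 := div_ne_zero (pow_ne_zero 2 hd) (mul_ne_zero hm (pow_ne_zero 3 hx))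
  have hY : phi1Y α β x y = k * y := by unfold phi1Y; ring
  rw [cubic_phi1X_eq hm hx, hY, mul_pow] at h
  exact mul_left_cancel₀ (pow_ne_zero 2 hk) h

end Phi1

section Fiber

variable [NeZero (2 : K)] {α β X t : K}

def fiberX (α β X t : K) : K := α * β + (α - β) * t / (2 * X)

def fiberY (α β X Y t : K) : K := (α * β - 1) * (α - β) * Y * t ^ 3 / (8 * X ^ 3)

theorem ne_zero_of_sq_sub_eq (hc : α * β ≠ 0) (hX : X ≠ 0)
    (ht : t ^ 2 - 2 * (α - β) * t = 4 * (α * β) * X) : t ≠ 0 := by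
  rintro rfl
  have h4 : (4 : K) ≠ 0 := by
    have := pow_ne_zero 2 (two_ne_zero (α := K)); norm_num at this; exact this
  exact mul_ne_zero (mul_ne_zero h4 hc) hX (by linear_combination -ht)

theorem fiberX_sub_ne_zero (hd : α - β ≠ 0) (hX : X ≠ 0) (ht : t ≠ 0) :
    fiberX α β X t - α * β ≠ 0 := by
  rw [fiberX, add_sub_cancel_left]
  exact div_ne_zero (mul_ne_zero hd ht) (mul_ne_zero two_ne_zero hX)

theorem phi1X_fiberX (hd : α - β ≠ 0) (hX : X ≠ 0) (ht0 : t ≠ 0)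
    (ht : t ^ 2 - 2 * (α - β) * t = 4 * (α * β) * X) :
    phi1X α β (fiberX α β X t) = X := by
  unfold phi1X fiberX
  field_simp
  linear_combination (-(α - β) ^ 2) * ht

theorem phi1Y_fiberY (Y : K) (hd : α - β ≠ 0) (hm : α * β - 1 ≠ 0) (hX : X ≠ 0) (ht : t ≠ 0) :
    phi1Y α β (fiberX α β X t) (fiberY α β X Y t) = Y := by
  have h8 : (8 : K) ≠ 0 := by
    have := pow_ne_zero 3 (two_ne_zero (α := K)); norm_num at this; exact this
  unfold phi1Y fiberX fiberY
  field_simp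
  ring

theorem fiberY_sq_eq_quintic {Y : K} (hd : α - β ≠ 0) (hm : α * β - 1 ≠ 0) (hc : α * β ≠ 0)
    (hX : X ≠ 0) (hE : Y ^ 2 = X * (X - 1) * (X - (α - β) ^ 2 / (α * β - 1) ^ 2))
    (ht : t ^ 2 - 2 * (α - β) * t = 4 * (α * β) * X) :
    fiberY α β X Y t ^ 2 = fiberX α β X t * (fiberX α β X t - 1) * (fiberX α β X t - α ^ 2) *
      (fiberX α β X t - β ^ 2) * (fiberX α β X t - α ^ 2 * β ^ 2) := by
  have ht0 := ne_zero_of_sq_sub_eq hc hX ht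
  refine quintic_eq_of_phi1_mem_e1 hd hm (fiberX_sub_ne_zero hd hX ht0) ?_
  rwa [phi1X_fiberX hd hX ht0 ht, phi1Y_fiberY Y hd hm hX ht0]

theorem fiberX_mul_fiberX {s : K} (hX : X ≠ 0) (hs : s ^ 2 = 4 * (α * β) * X + (α - β) ^ 2) :
    fiberX α β X (α - β + s) * fiberX α β X (α - β - s) = α ^ 2 * β ^ 2 := by
  unfold fiberX
  field_simp
  linear_combination (-(α - β) ^ 2) * hs

end Fiber

theorem stmt_7_general (α β X Y s : ℂ)
    (hα0 : α^2 ≠ 0) (hβ0 : β^2 ≠ 0)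
    (hαβ : α^2 ≠ β^2) (hαβ1 : α^2 * β^2 ≠ 1)
    (hE : Y^2 = X * (X - 1) * (X - (α - β)^2 / (α * β - 1)^2))
    (hX : X ≠ 0)
    (hs : s^2 = 4 * (α * β) * X + (α - β)^2) :
    (let x₁ := α * β + (α - β) * (α - β + s) / (2 * X);
     let y₁ := (α * β - 1) * (α - β) * Y * (α - β + s)^3 / (8 * X^3);
     let x₂ := α * β + (α - β) * (α - β - s) / (2 * X);
     let y₂ := (α * β - 1) * (α - β) * Y * (α - β - s)^3 / (8 * X^3);
     y₁^2 = x₁ * (x₁ - 1) * (x₁ - α^2) * (x₁ - β^2) * (x₁ - α^2 * β^2) ∧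
     y₂^2 = x₂ * (x₂ - 1) * (x₂ - α^2) * (x₂ - β^2) * (x₂ - α^2 * β^2) ∧
     x₁ * x₂ = α^2 * β^2 ∧
     (α - β)^2 * x₁ / (x₁ - α * β)^2 = X) := by
  have hd : α - β ≠ 0 := fun h => hαβ (by linear_combination (α + β) * h)
  have hm : α * β - 1 ≠ 0 := fun h => hαβ1 (by linear_combination (α * β + 1) * h)
  have hc : α * β ≠ 0 :=
    mul_ne_zero (pow_ne_zero_iff two_ne_zero |>.mp hα0) (pow_ne_zero_iff two_ne_zero |>.mp hβ0)
  have htp : (α - β + s) ^ 2 - 2 * (α - β) * (α - β + s) = 4 * (α * β) * X := by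
    linear_combination hs
  have htm : (α - β - s) ^ 2 - 2 * (α - β) * (α - β - s) = 4 * (α * β) * X := by
    linear_combination hs
  exact ⟨fiberY_sq_eq_quintic hd hm hc hX hE htp, fiberY_sq_eq_quintic hd hm hc hX hE htm,
    fiberX_mul_fiberX hX hs,
    phi1X_fiberX hd hX (ne_zero_of_sq_sub_eq hc hX htp) htp⟩

theorem stmt_7 (α β X Y s : ℂ)
    (hα0 : α^2 ≠ 0) (hα1 : α^2 ≠ 1) (hβ0 : β^2 ≠ 0) (hβ1 : β^2 ≠ 1)
    (hαβ : α^2 ≠ β^2) (hαβ1 : α^2 * β^2 ≠ 1)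
    (hE : Y^2 = X * (X - 1) * (X - (α - β)^2 / (α * β - 1)^2))
    (hX : X ≠ 0)
    (hs : s^2 = 4 * (α * β) * X + (α - β)^2) :
    (let x₁ := α * β + (α - β) * (α - β + s) / (2 * X);
     let y₁ := (α * β - 1) * (α - β) * Y * (α - β + s)^3 / (8 * X^3);
     let x₂ := α * β + (α - β) * (α - β - s) / (2 * X);
     let y₂ := (α * β - 1) * (α - β) * Y * (α - β - s)^3 / (8 * X^3);
     y₁^2 = x₁ * (x₁ - 1) * (x₁ - α^2) * (x₁ - β^2) * (x₁ - α^2 * β^2) ∧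
     y₂^2 = x₂ * (x₂ - 1) * (x₂ - α^2) * (x₂ - β^2) * (x₂ - α^2 * β^2) ∧
     x₁ * x₂ = α^2 * β^2 ∧
     (α - β)^2 * x₁ / (x₁ - α * β)^2 = X) :=
  stmt_7_general α β X Y s hα0 hβ0 hαβ hαβ1 hE hX hs
end

section
/- Let f_J(s) = s⁴ + a₂ s² + a₄ with a₄(a₂² − 4a₄) ≠ 0, and let a ∈ ℂ with f_J(a) = 0. If (s, t) ∈ ℂ² satisfies t² = f_J(s) and s ≠ a, then setting x = f_J'(a)/(s−a) + f_J''(a)/6 and y = f_J'(a)·t/(s−a)², the pair (x, y) satisfies y² = x³ − (4a₄ + a₂²/3)x − (8/3)a₂a₄ + (2/27)a₂³. -/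
theorem stmt_10 (a₂ a₄ a s t : ℂ)
    (h : a₄ * (a₂^2 - 4 * a₄) ≠ 0)
    (ha : a^4 + a₂ * a^2 + a₄ = 0)
    (ht : t^2 = s^4 + a₂ * s^2 + a₄)
    (hs : s ≠ a) :
    ((4 * a^3 + 2 * a₂ * a) * t / (s - a)^2)^2 =
      ((4 * a^3 + 2 * a₂ * a) / (s - a) + (12 * a^2 + 2 * a₂) / 6)^3
        - (4 * a₄ + a₂^2 / 3) * ((4 * a^3 + 2 * a₂ * a) / (s - a) + (12 * a^2 + 2 * a₂) / 6)
        - (8 / 3) * a₂ * a₄ + (2 / 27) * a₂^3 := by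
  have hsa : s - a ≠ 0 := sub_ne_zero.mpr hs
  set w : ℂ := (s - a)⁻¹ with hwdef
  set u : ℂ := ((s - a)^2)⁻¹ with hudef
  have hw : (s - a) * w = 1 := mul_inv_cancel₀ hsa
  have hu : u = w^2 := by rw [hudef, hwdef, ← inv_pow]
  linear_combination
    ((16:ℂ) * a^6 * t^2 * u + (16:ℂ) * a^6 * t^2 * w^2 + (16:ℂ) * a₂ * a^4 * t^2 * u + (16:ℂ) * a₂ * a^4 * t^2 * w^2 + (4:ℂ) * a₂^2 * a^2 * t^2 * u + (4:ℂ) * a₂^2 * a^2 * t^2 * w^2) * hu +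
    ((16:ℂ) * a^6 * w^4 + (16:ℂ) * a₂ * a^4 * w^4 + (4:ℂ) * a₂^2 * a^2 * w^4) * ht +
    ((8:ℂ) * a^2 + (16:ℂ) * a^3 * w + (16:ℂ) * a^6 * w^4 + (4:ℂ) * a₂ + (8:ℂ) * a₂ * a * w + (16:ℂ) * a₂ * a^4 * w^4 + (4:ℂ) * a₂^2 * a^2 * w^4) * ha +
    ((16:ℂ) * a^6 + (16:ℂ) * a^6 * s * w + (16:ℂ) * a^6 * s^2 * w^2 + (16:ℂ) * a^6 * s^3 * w^3 + (48:ℂ) * a^7 * w + (32:ℂ) * a^7 * s * w^2 + (16:ℂ) * a^7 * s^2 * w^3 + (48:ℂ) * a^8 * w^2 + (16:ℂ) * a^8 * s * w^3 + (16:ℂ) * a^9 * w^3 + (16:ℂ) * a₂ * a^4 + (16:ℂ) * a₂ * a^4 * s * w + (16:ℂ) * a₂ * a^4 * s^2 * w^2 + (16:ℂ) * a₂ * a^4 * s^3 * w^3 + (48:ℂ) * a₂ * a^5 * w + (32:ℂ) * a₂ * a^5 * s * w^2 + (16:ℂ) * a₂ * a^5 * s^2 * w^3 + (64:ℂ) *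 a₂ * a^6 * w^2 + (32:ℂ) * a₂ * a^6 * s * w^3 + (32:ℂ) * a₂ * a^7 * w^3 + (4:ℂ) * a₂^2 * a^2 + (4:ℂ) * a₂^2 * a^2 * s * w + (4:ℂ) * a₂^2 * a^2 * s^2 * w^2 + (4:ℂ) * a₂^2 * a^2 * s^3 * w^3 + (12:ℂ) * a₂^2 * a^3 * w + (8:ℂ) * a₂^2 * a^3 * s * w^2 + (4:ℂ) * a₂^2 * a^3 * s^2 * w^3 + (28:ℂ) * a₂^2 * a^4 * w^2 + (20:ℂ) * a₂^2 * a^4 * s * w^3 + (20:ℂ) * a₂^2 * a^5 * w^3 + (4:ℂ) * a₂^3 * a^2 * w^2 + (4:ℂ) * a₂^3 * a^2 * s * w^3 + (4:ℂ) * a₂^3 * a^3 * w^3) * hw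
end
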